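/- arXiv:2003.11929 — 5 statements merged into one kernel-verified Lean document; each statement's English description precedes it below -/
import Mathlib

section
/- Let F be a finite family of continuous self-maps on a Hausdorff space X and let Y be a nonempty closed subset with F(X) ⊆ Y ⊆ X. Then F is a topologically contracting system on X if and only if F is a topologically contracting system on Y. -/
open Set

/-- Composition of a list of self-maps. -/
def Comp {X : Type*} (l : List (X → X)) : X → X := l.foldr (· ∘ ·) id

/-- `F` is a topologically contracting system on `Y ⊆ X`. -/
def TopContracting {X : Type*} [TopologicalSpace X] (F : Set (X → X)) (Y : Set X) : Prop :=
  ∀ 𝒰 : Set (Set X), (∀ U ∈ 𝒰, IsOpen U) → Y ⊆ ⋃₀ 𝒰 →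
    ∃ n : ℕ, ∀ l : List (X → X), l.length = n → (∀ f ∈ l, f ∈ F) →
      ∃ U ∈ 𝒰, Comp l '' Y ⊆ U

section Comp

variable {X : Type*}

theorem comp_append (l l' : List (X → X)) : Comp (l ++ l') = Comp l ∘ Comp l' := by
  induction l with
  | nil => rfl
  | cons f t ih => exact congrArg (f ∘ ·) ih

theorem comp_concat (l : List (X → X)) (g : X → X) : Comp (l.concat g) = Comp l ∘ g := by
  rw [List.concat_eq_append, comp_append]
  rfl

theorem mapsTo_comp {l : List (X → X)} {Y : Set X} (h : ∀ f ∈ l, MapsTo f Y Y) :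
    MapsTo (Comp l) Y Y := by
  induction l with
  | nil => exact mapsTo_id Y
  | cons f t ih => exact (h f (by simp)).comp (ih fun g hg => h g (by simp [hg]))

end Comp

namespace TopContracting

variable {X : Type*} [TopologicalSpace X] {F : Set (X → X)} {Y Z : Set X}

/-- Adding the open set `Yᶜ` turns a cover of `Y` into a cover of `Z`; no image `Comp l '' Y` of
the nonempty invariant set `Y` can lie in `Yᶜ`, so the member found for `Z` is a member of the
original cover. -/
theorem restrict (h : TopContracting F Z) (hYZ : Y ⊆ Z) (hYne : Y.Nonempty) (hYcl : IsClosed Y)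
    (hinv : ∀ f ∈ F, MapsTo f Y Y) : TopContracting F Y := by
  intro 𝒰 hopen hcov
  have hopen' : ∀ U ∈ insert Yᶜ 𝒰, IsOpen U := by
    rintro U (rfl | hU)
    exacts [hYcl.isOpen_compl, hopen U hU]
  have hcov' : Z ⊆ ⋃₀ insert Yᶜ 𝒰 := by
    rw [sUnion_insert]
    exact fun x _ => (em (x ∈ Y)).symm.imp_right fun hx => hcov hx
  obtain ⟨n, hn⟩ := h _ hopen' hcov'
  refine ⟨n, fun l hlen hlF => ?_⟩
  obtain ⟨U, hU, hZU⟩ := hn l hlen hlF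
  have hYU : Comp l '' Y ⊆ U := (image_mono hYZ).trans hZU
  rcases hU with rfl | hU
  · obtain ⟨x, hx⟩ := hYne
    exact absurd (mapsTo_comp (fun f hf => hinv f (hlF f hf)) hx) (hYU (mem_image_of_mem _ hx))
  · exact ⟨U, hU, hYU⟩

/-- One extra map sends all of `X` into `Y`, so words of length `n + 1` contract `X` as well
as words of length `n` contract `Y`. -/
theorem univ_of_range_subset (h : TopContracting F Y) (hFY : ∀ f ∈ F, range f ⊆ Y) :
    TopContracting F univ := by
  intro 𝒰 hopen hcov
  obtain ⟨n, hn⟩ := h 𝒰 hopen ((subset_univ Y).trans hcov)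
  refine ⟨n + 1, fun l hlen hlF => ?_⟩
  obtain ⟨l', g, rfl⟩ := (List.eq_nil_or_concat l).resolve_left (by rintro rfl; simp at hlen)
  obtain ⟨U, hU, hsub⟩ := hn l' (by simpa using hlen) (fun f hf => hlF f (by simp [hf]))
  refine ⟨U, hU, ?_⟩
  rw [comp_concat, image_comp, image_univ]
  exact (image_mono (hFY g (hlF g (by simp)))).trans hsub

end TopContracting

theorem stmt1_general {X : Type*} [TopologicalSpace X] (F : Set (X → X))
    (Y : Set X) (hYne : Y.Nonempty) (hYcl : IsClosed Y)
    (hFX : ∀ f ∈ F, range f ⊆ Y) :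
    TopContracting F Set.univ ↔ TopContracting F Y :=
  ⟨fun h => h.restrict (subset_univ Y) hYne hYcl
      fun f hf x _ => range_subset_iff.mp (hFX f hf) x,
    fun h => h.univ_of_range_subset hFX⟩

theorem stmt1 {X : Type*} [TopologicalSpace X] [T2Space X] (F : Set (X → X)) (hF : F.Finite)
    (hcont : ∀ f ∈ F, Continuous f) (Y : Set X) (hYne : Y.Nonempty) (hYcl : IsClosed Y)
    (hFX : ∀ f ∈ F, range f ⊆ Y) :
    TopContracting F Set.univ ↔ TopContracting F Y :=
  stmt1_general F Y hYne hYcl hFX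
end

section
/- Let X be a compact metric space and let F ∪ P be a finite family of continuous self-maps on X with X = ⋃_{f∈F∪P} f(X). If F and P are both topologically contracting systems on X, and for every f ∈ F and p ∈ P the set f(p(X)) is a singleton, then (X, F ∪ P) is a topological fractal. -/
/-!
A long word in `F ∪ P` either contains a letter of `F` immediately followed by a letter of `P`,
in which case its image is a single point, or it is a word of `P` followed by a word of `F`.
A long `P`-prefix makes the image small because `P` is contracting. Otherwise the `P`-prefix is
one of finitely many short words `w`, and the `F`-suffix is long; pulling the cover back along
the continuous map `Comp w` and using that `F` is contracting makes the image small again, with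
a bound on the suffix length that is uniform over those finitely many `w`.
-/

open Set

/-- `(X, F)` is a topological fractal (whole-space version). -/
def TopFractal {X : Type*} [TopologicalSpace X] (F : Set (X → X)) : Prop :=
  F.Finite ∧ (∀ f ∈ F, Continuous f) ∧ (⋃ f ∈ F, Set.range f) = Set.univ ∧
    TopContracting F Set.univ

theorem Set.Finite.setOf_length_le_forall_mem {α : Type*} {s : Set α} (hs : s.Finite) (n : ℕ) :
    {l : List α | l.length ≤ n ∧ ∀ a ∈ l, a ∈ s}.Finite := by
  have := hs.to_subtype
  refine ((List.finite_length_le s n).image (List.map Subtype.val)).subset ?_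
  rintro l ⟨hlen, hl⟩
  lift l to List s using hl
  exact ⟨l, by simpa using hlen, rfl⟩

theorem List.eq_append_cons_cons_or_eq_append {α : Type*} {s t : Set α} :
    ∀ l : List α, (∀ a ∈ l, a ∈ s ∪ t) →
      (∃ u a b v, l = u ++ a :: b :: v ∧ a ∈ s ∧ b ∈ t) ∨
      (∃ u v, l = u ++ v ∧ (∀ a ∈ u, a ∈ t) ∧ (∀ a ∈ v, a ∈ s))
  | [], _ => .inr ⟨[], [], rfl, by simp, by simp⟩
  | a :: l, hl => by
    rw [List.forall_mem_cons] at hl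
    rcases eq_append_cons_cons_or_eq_append l hl.2 with
      ⟨u, b, c, v, rfl, hb, hc⟩ | ⟨u, v, rfl, hu, hv⟩
    · exact .inl ⟨a :: u, b, c, v, rfl, hb, hc⟩
    · by_cases ha : a ∈ s
      · cases u with
        | nil => exact .inr ⟨[], a :: v, rfl, by simp, List.forall_mem_cons.2 ⟨ha, hv⟩⟩
        | cons b u => exact .inl ⟨[], a, b, u ++ v, rfl, ha, hu b List.mem_cons_self⟩
      · exact .inr ⟨a :: u, v, rfl,
          List.forall_mem_cons.2 ⟨hl.1.resolve_left ha, hu⟩, hv⟩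

section Comp

variable {X : Type*}

theorem Comp_cons (f : X → X) (l : List (X → X)) : Comp (f :: l) = f ∘ Comp l := rfl

theorem Comp_append (l₁ l₂ : List (X → X)) : Comp (l₁ ++ l₂) = Comp l₁ ∘ Comp l₂ := by
  induction l₁ with
  | nil => rfl
  | cons f l ih => rw [List.cons_append, Comp_cons, Comp_cons, ih, Function.comp_assoc]

theorem continuous_Comp [TopologicalSpace X] {l : List (X → X)} (h : ∀ f ∈ l, Continuous f) :
    Continuous (Comp l) := by
  induction l with
  | nil => exact continuous_id
  | cons f l ih =>
    rw [List.forall_mem_cons] at h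
    exact h.1.comp (ih h.2)

end Comp

namespace TopContracting

variable {X : Type*} [TopologicalSpace X] {F : Set (X → X)} {𝒰 : Set (Set X)}

theorem exists_forall_length_le (hF : TopContracting F univ) (hopen : ∀ U ∈ 𝒰, IsOpen U)
    (hcov : univ ⊆ ⋃₀ 𝒰) :
    ∃ n, ∀ l : List (X → X), n ≤ l.length → (∀ f ∈ l, f ∈ F) → ∃ U ∈ 𝒰, range (Comp l) ⊆ U := by
  obtain ⟨n, hn⟩ := hF 𝒰 hopen hcov
  refine ⟨n, fun l hl hlF => ?_⟩
  obtain ⟨U, hU, hsub⟩ := hn (l.take n) (List.length_take_of_le hl)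
    (fun f hf => hlF f (List.mem_of_mem_take hf))
  refine ⟨U, hU, ?_⟩
  rw [← l.take_append_drop n, Comp_append]
  exact (range_comp_subset_range _ _).trans (by rwa [← image_univ])

theorem exists_forall_length_le_comp_left (hF : TopContracting F univ) {g : X → X}
    (hg : Continuous g) (hopen : ∀ U ∈ 𝒰, IsOpen U) (hcov : univ ⊆ ⋃₀ 𝒰) :
    ∃ n, ∀ l : List (X → X), n ≤ l.length → (∀ f ∈ l, f ∈ F) →
      ∃ U ∈ 𝒰, range (g ∘ Comp l) ⊆ U := by
  obtain ⟨n, hn⟩ := hF.exists_forall_length_le (𝒰 := preimage g '' 𝒰)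
    (by rintro _ ⟨U, hU, rfl⟩; exact (hopen U hU).preimage hg)
    (fun x _ => by
      obtain ⟨U, hU, hx⟩ := hcov (mem_univ (g x))
      exact ⟨_, mem_image_of_mem _ hU, hx⟩)
  refine ⟨n, fun l hl hlF => ?_⟩
  obtain ⟨_, ⟨U, hU, rfl⟩, hsub⟩ := hn l hl hlF
  exact ⟨U, hU, range_comp g _ ▸ image_subset_iff.2 hsub⟩

theorem exists_forall_length_le_forall_comp_left (hF : TopContracting F univ) {G : Set (X → X)}
    (hG : G.Finite) (hGc : ∀ g ∈ G, Continuous g) (hopen : ∀ U ∈ 𝒰, IsOpen U)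
    (hcov : univ ⊆ ⋃₀ 𝒰) :
    ∃ n, ∀ g ∈ G, ∀ l : List (X → X), n ≤ l.length → (∀ f ∈ l, f ∈ F) →
      ∃ U ∈ 𝒰, range (g ∘ Comp l) ⊆ U := by
  choose! N hN using fun g (hg : g ∈ G) => hF.exists_forall_length_le_comp_left (hGc g hg) hopen hcov
  obtain ⟨n, hn⟩ := (hG.image N).bddAbove
  exact ⟨n, fun g hg l hl => hN g hg l ((hn (mem_image_of_mem N hg)).trans hl)⟩

end TopContracting

theorem stmt4_general {X : Type*} [MetricSpace X] (F P : Set (X → X))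
    (hfin : (F ∪ P).Finite) (hcont : ∀ f ∈ F ∪ P, Continuous f)
    (hcover : (⋃ f ∈ F ∪ P, Set.range f) = Set.univ)
    (hFc : TopContracting F Set.univ) (hPc : TopContracting P Set.univ)
    (hsing : ∀ f ∈ F, ∀ p ∈ P, ∃ x : X, f '' Set.range p = {x}) :
    TopFractal (F ∪ P) := by
  refine ⟨hfin, hcont, hcover, fun 𝒰 hopen hcov => ?_⟩
  obtain ⟨nP, hnP⟩ := hPc.exists_forall_length_le hopen hcov
  have hWfin := (hfin.subset subset_union_right).setOf_length_le_forall_mem nP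
  obtain ⟨nF, hnF⟩ := hFc.exists_forall_length_le_forall_comp_left (hWfin.image Comp)
    (by rintro _ ⟨w, ⟨-, hw⟩, rfl⟩; exact continuous_Comp fun g hg => hcont g (.inr (hw g hg)))
    hopen hcov
  refine ⟨nP + nF, fun l hl hlFP => ?_⟩
  rw [image_univ]
  rcases l.eq_append_cons_cons_or_eq_append hlFP with
    ⟨w, f, p, t, rfl, hf, hp⟩ | ⟨w, r, rfl, hw, hr⟩
  · obtain ⟨x, hx⟩ := hsing f hf p hp
    obtain ⟨U, hU, hxU⟩ := hcov (mem_univ (Comp w x))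
    refine ⟨U, hU, ?_⟩
    rintro _ ⟨y, rfl⟩
    have hfp : f (p (Comp t y)) = x := hx.subset (mem_image_of_mem f (mem_range_self _))
    simpa [Comp_append, Comp_cons, hfp] using hxU
  rw [Comp_append]
  by_cases hwlen : nP ≤ w.length
  · obtain ⟨U, hU, hsub⟩ := hnP w hwlen hw
    exact ⟨U, hU, (range_comp_subset_range _ _).trans hsub⟩
  · rw [List.length_append] at hl
    exact hnF _ (mem_image_of_mem Comp ⟨by omega, hw⟩) r (by omega) hr

theorem stmt4 {X : Type*} [MetricSpace X] [CompactSpace X] (F P : Set (X → X))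
    (hfin : (F ∪ P).Finite) (hcont : ∀ f ∈ F ∪ P, Continuous f)
    (hcover : (⋃ f ∈ F ∪ P, Set.range f) = Set.univ)
    (hFc : TopContracting F Set.univ) (hPc : TopContracting P Set.univ)
    (hsing : ∀ f ∈ F, ∀ p ∈ P, ∃ x : X, f '' Set.range p = {x}) :
    TopFractal (F ∪ P) :=
  stmt4_general F P hfin hcont hcover hFc hPc hsing
end

section
/- Let X be a Peano continuum and A ⊆ X a subset with nonempty interior. Then there exists a nonempty open set U ⊆ A such that X \ U is a finite union of Peano continua. -/
open Set

/-- `S` is a Peano continuum as a subspace. -/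
def IsPeanoOn {X : Type*} [TopologicalSpace X] (S : Set X) : Prop :=
  IsCompact S ∧ IsConnected S ∧ LocallyConnectedSpace S

open Metric Filter Topology

set_option linter.unusedSectionVars false
set_option linter.unnecessarySimpa false

namespace Stmt11Aux

section

variable {X : Type*} [MetricSpace X]

/-- Stages of the star construction: seed `S` at level `n`; at stage `k+1` we add all
members of `D (n+k+1)` meeting the previous stage. -/
def St (D : ℕ → Finset (Set X)) (S : Set X) (n : ℕ) : ℕ → Set X
  | 0 => S
  | k+1 => St D S n k ∪ ⋃₀ {C | C ∈ D (n+k+1) ∧ (C ∩ St D S n k).Nonempty}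

def star (D : ℕ → Finset (Set X)) (S : Set X) (n : ℕ) : Set X := ⋃ k, St D S n k

/-- `D` is a good sequence of decompositions of `X`. -/
def GoodD (D : ℕ → Finset (Set X)) : Prop :=
  ∀ m, (∀ C ∈ D m, IsConnected C ∧ Metric.diam C ≤ (2:ℝ)⁻¹ ^ m) ∧
    ⋃₀ (↑(D m) : Set (Set X)) = univ

/-- `P` has property S: for every δ, it is a finite union of preconnected δ-small subsets. -/
def PropS (P : Set X) : Prop :=
  ∀ δ : ℝ, 0 < δ → ∃ F : Set (Set X), F.Finite ∧
    (∀ C ∈ F, IsPreconnected C ∧ C ⊆ P ∧ Metric.diam C ≤ δ) ∧ P = ⋃₀ F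

variable {D : ℕ → Finset (Set X)} {S B : Set X} {n k₀ : ℕ}

lemma St_mono_succ (k : ℕ) : St D S n k ⊆ St D S n (k+1) := subset_union_left

lemma St_mono {k l : ℕ} (h : k ≤ l) : St D S n k ⊆ St D S n l := by
  induction l with
  | zero => simpa [Nat.le_zero.mp h]
  | succ l ih =>
    rcases Nat.lt_or_ge k (l+1) with h'|h'
    · exact (ih (Nat.lt_succ_iff.mp h')).trans (St_mono_succ l)
    · have : k = l+1 := le_antisymm h h'
      simp [this]

lemma subset_St (k : ℕ) : S ⊆ St D S n k := St_mono (Nat.zero_le k)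

lemma subset_star : S ⊆ star D S n := (subset_St 0).trans (subset_iUnion _ 0)

lemma preconn_union_sUnion {s : Set X} (hs : IsPreconnected s) (hsne : s.Nonempty)
    {𝒮 : Set (Set X)} (h : ∀ C ∈ 𝒮, IsPreconnected C ∧ (C ∩ s).Nonempty) :
    IsPreconnected (s ∪ ⋃₀ 𝒮) := by
  obtain ⟨x, hx⟩ := hsne
  have heq : s ∪ ⋃₀ 𝒮 = ⋃₀ (insert s ((fun C => s ∪ C) '' 𝒮)) := by
    ext y; simp only [mem_union, mem_sUnion, mem_insert_iff, mem_image]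
    constructor
    · rintro (hy | ⟨C, hC, hyC⟩)
      · exact ⟨s, Or.inl rfl, hy⟩
      · exact ⟨s ∪ C, Or.inr ⟨C, hC, rfl⟩, Or.inr hyC⟩
    · rintro ⟨t, (rfl | ⟨C, hC, rfl⟩), hyt⟩
      · exact Or.inl hyt
      · rcases hyt with hy | hy
        · exact Or.inl hy
        · exact Or.inr ⟨C, hC, hy⟩
  rw [heq]
  apply isPreconnected_sUnion x
  · rintro t (rfl | ⟨C, hC, rfl⟩)
    · exact hx
    · exact Or.inl hx
  · rintro t (rfl | ⟨C, hC, rfl⟩)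
    · exact hs
    · obtain ⟨y, hyC, hys⟩ := (h C hC).2
      exact IsPreconnected.union y hys hyC hs (h C hC).1

lemma St_isConnected (hD : GoodD D) (hS : IsConnected S) (k : ℕ) :
    IsConnected (St D S n k) := by
  induction k with
  | zero => exact hS
  | succ k ih =>
    refine ⟨ih.1.mono subset_union_left, ?_⟩
    exact preconn_union_sUnion ih.2 ih.1 (fun C hC =>
      ⟨((hD _).1 C hC.1).1.2, hC.2⟩)

lemma star_isConnected (hD : GoodD D) (hS : IsConnected S) :
    IsConnected (star D S n) := by
  obtain ⟨x, hx⟩ := hS.1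
  refine ⟨⟨x, subset_star hx⟩, isPreconnected_iUnion ⟨x, ?_⟩
    (fun k => (St_isConnected hD hS k).2)⟩
  exact mem_iInter.mpr fun k => subset_St k hx


section
variable [CompactSpace X]

lemma St_dist (hD : GoodD D) (k : ℕ) :
    ∀ x ∈ St D S n k, ∃ x' ∈ S, dist x x' ≤ ∑ j ∈ Finset.range k, (2:ℝ)⁻¹ ^ (n+1+j) := by
  induction k with
  | zero => exact fun x hx => ⟨x, hx, by simp⟩
  | succ k ih =>
    intro x hx
    have hsum : ∑ j ∈ Finset.range k, (2:ℝ)⁻¹ ^ (n+1+j) ≤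
        ∑ j ∈ Finset.range (k+1), (2:ℝ)⁻¹ ^ (n+1+j) := by
      apply Finset.sum_le_sum_of_subset_of_nonneg (Finset.range_subset_range.2 (Nat.le_succ k))
      intros; positivity
    rcases hx with hx | ⟨C, ⟨hCD, p, hpC, hpSt⟩, hxC⟩
    · obtain ⟨x', hx', hd⟩ := ih x hx
      exact ⟨x', hx', hd.trans hsum⟩
    · obtain ⟨x', hx', hd⟩ := ih p hpSt
      refine ⟨x', hx', ?_⟩
      have h1 : dist x p ≤ (2:ℝ)⁻¹ ^ (n+k+1) :=
        (dist_le_diam_of_mem isBounded_of_compactSpace hxC hpC).trans ((hD _).1 C hCD).2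
      calc dist x x' ≤ dist x p + dist p x' := dist_triangle _ _ _
        _ ≤ (2:ℝ)⁻¹ ^ (n+k+1) + ∑ j ∈ Finset.range k, (2:ℝ)⁻¹ ^ (n+1+j) :=
            add_le_add h1 hd
        _ = ∑ j ∈ Finset.range (k+1), (2:ℝ)⁻¹ ^ (n+1+j) := by
            rw [Finset.sum_range_succ, add_comm]
            congr 1
            ring
        _ ≤ _ := le_refl _

lemma geom_tail (k : ℕ) : ∑ j ∈ Finset.range k, (2:ℝ)⁻¹ ^ (n+1+j) ≤ (2:ℝ)⁻¹ ^ n := by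
  have h : ∑ j ∈ Finset.range k, (2:ℝ)⁻¹ ^ (n+1+j)
      = (2:ℝ)⁻¹ ^ (n+1) * ∑ j ∈ Finset.range k, (2:ℝ)⁻¹ ^ j := by
    rw [Finset.mul_sum]
    exact Finset.sum_congr rfl fun j _ => by rw [← pow_add]
  rw [h]
  have h2 : ∑ j ∈ Finset.range k, (2:ℝ)⁻¹ ^ j ≤ 2 := by
    simpa [one_div] using sum_geometric_two_le k
  calc (2:ℝ)⁻¹ ^ (n+1) * ∑ j ∈ Finset.range k, (2:ℝ)⁻¹ ^ j
      ≤ (2:ℝ)⁻¹ ^ (n+1) * 2 := by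
        apply mul_le_mul_of_nonneg_left h2; positivity
    _ = (2:ℝ)⁻¹ ^ n := by rw [pow_succ]; ring
    _ ≤ _ := le_refl _

lemma star_dist (hD : GoodD D) {x : X} (hx : x ∈ star D S n) :
    ∃ x' ∈ S, dist x x' ≤ (2:ℝ)⁻¹ ^ n := by
  obtain ⟨k, hk⟩ := mem_iUnion.mp hx
  obtain ⟨x', hx', hd⟩ := St_dist hD k x hk
  exact ⟨x', hx', hd.trans (geom_tail k)⟩

lemma star_diam (hD : GoodD D) (hS : S.Nonempty) :
    Metric.diam (star D S n) ≤ Metric.diam S + 2 * (2:ℝ)⁻¹ ^ n := by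
  apply diam_le_of_forall_dist_le (by positivity)
  intro x hx y hy
  obtain ⟨x', hx', hdx⟩ := star_dist hD hx
  obtain ⟨y', hy', hdy⟩ := star_dist hD hy
  calc dist x y ≤ dist x x' + dist x' y' + dist y' y :=
        dist_triangle4 _ _ _ _
    _ ≤ (2:ℝ)⁻¹ ^ n + Metric.diam S + (2:ℝ)⁻¹ ^ n := by
        refine add_le_add (add_le_add hdx ?_) (by rwa [dist_comm])
        exact dist_le_diam_of_mem isBounded_of_compactSpace hx' hy'
    _ = Metric.diam S + 2 * (2:ℝ)⁻¹ ^ n := by ring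


lemma St_star_subset_St (hB : B ∈ D (n+k₀+1)) (hmeet : (B ∩ St D S n k₀).Nonempty) :
    ∀ j, St D B (n+k₀+1) j ⊆ St D S n (k₀+1+j) := by
  intro j
  induction j with
  | zero =>
    show B ⊆ St D S n (k₀+1)
    have hk : k₀ + 1 = k₀ + 1 := rfl
    intro x hx
    exact Or.inr ⟨B, ⟨hB, hmeet⟩, hx⟩
  | succ j ih =>
    intro x hx
    rcases hx with hx | ⟨C, ⟨hCD, p, hpC, hpSt⟩, hxC⟩
    · exact St_mono_succ _ (ih hx)
    · have he : n + k₀ + 1 + j + 1 = n + (k₀+1+j) + 1 := by omega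
      refine Or.inr ⟨C, ⟨by rwa [he] at hCD, p, hpC, ih hpSt⟩, hxC⟩

lemma star_star_subset (hB : B ∈ D (n+k₀+1)) (hmeet : (B ∩ St D S n k₀).Nonempty) :
    star D B (n+k₀+1) ⊆ star D S n := by
  intro x hx
  obtain ⟨j, hj⟩ := mem_iUnion.mp hx
  exact mem_iUnion.mpr ⟨k₀+1+j, St_star_subset_St hB hmeet j hj⟩

lemma St_subset_stars (hD : GoodD D) :
    ∀ k, St D S n (k₀+1+k) ⊆ St D S n k₀ ∪
      ⋃₀ {T | ∃ B, B ∈ D (n+k₀+1) ∧ (B ∩ St D S n k₀).Nonempty ∧ T = St D B (n+k₀+1) k} := by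
  intro k
  induction k with
  | zero =>
    intro x hx
    rcases hx with hx | ⟨C, ⟨hCD, hCm⟩, hxC⟩
    · exact Or.inl hx
    · exact Or.inr ⟨C, ⟨C, hCD, hCm, rfl⟩, hxC⟩
  | succ k ih =>
    intro x hx
    have he : n + (k₀+1+k) + 1 = n + k₀ + 1 + k + 1 := by omega
    rcases hx with hx | ⟨C, ⟨hCD, p, hpC, hpSt⟩, hxC⟩
    · rcases ih hx with hx' | ⟨T, ⟨B', hB', hB'm, rfl⟩, hxT⟩
      · exact Or.inl hx'
      · exact Or.inr ⟨_, ⟨B', hB', hB'm, rfl⟩, St_mono_succ _ hxT⟩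
    · have hCD : C ∈ D (n+k₀+1+k+1) := by
        have : n + (k₀+1+k) + 1 = n+k₀+1+k+1 := by omega
        exact this ▸ hCD
      rcases ih hpSt with hp' | ⟨T, ⟨B', hB', hB'm, rfl⟩, hpT⟩
      · -- p ∈ St k₀ : find B' ∈ D (n+k₀+1) containing p
        have hcov : p ∈ ⋃₀ (↑(D (n+k₀+1)) : Set (Set X)) := by
          rw [(hD (n+k₀+1)).2]; trivial
        obtain ⟨B', hB', hpB'⟩ := hcov
        refine Or.inr ⟨_, ⟨B', hB', ⟨p, hpB', hp'⟩, rfl⟩, ?_⟩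
        have hpB : p ∈ St D B' (n+k₀+1) k := St_mono (Nat.zero_le k) hpB'
        exact Or.inr ⟨C, ⟨hCD, p, hpC, hpB⟩, hxC⟩
      · exact Or.inr ⟨_, ⟨B', hB', hB'm, rfl⟩, Or.inr ⟨C, ⟨hCD, p, hpC, hpT⟩, hxC⟩⟩

lemma star_eq_sUnion_stars (hD : GoodD D) :
    star D S n = ⋃₀ {T | ∃ B, B ∈ D (n+k₀+1) ∧ (B ∩ St D S n k₀).Nonempty ∧
      T = star D B (n+k₀+1)} := by
  apply Subset.antisymm
  · intro x hx
    obtain ⟨m, hm⟩ := mem_iUnion.mp hx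
    have hx' : x ∈ St D S n (k₀+1+m) := St_mono (by omega) hm
    have hSt0 : St D S n k₀ ⊆ ⋃₀ {T | ∃ B, B ∈ D (n+k₀+1) ∧ (B ∩ St D S n k₀).Nonempty ∧
        T = star D B (n+k₀+1)} := by
      intro p hp
      have hcov : p ∈ ⋃₀ (↑(D (n+k₀+1)) : Set (Set X)) := by
        rw [(hD (n+k₀+1)).2]; trivial
      obtain ⟨B', hB', hpB'⟩ := hcov
      refine ⟨_, ⟨B', hB', ⟨p, hpB', hp⟩, rfl⟩, ?_⟩
      exact mem_iUnion.mpr ⟨0, hpB'⟩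
    rcases St_subset_stars hD m hx' with h | ⟨T, ⟨B', hB', hB'm, rfl⟩, hxT⟩
    · exact hSt0 h
    · exact ⟨_, ⟨B', hB', hB'm, rfl⟩, mem_iUnion.mpr ⟨m, hxT⟩⟩
  · rintro x ⟨T, ⟨B', hB', hB'm, rfl⟩, hxT⟩
    exact star_star_subset hB' hB'm hxT


lemma PropS.closure {P : Set X} (h : PropS P) : PropS (_root_.closure P) := by
  intro δ hδ
  obtain ⟨𝒞, h𝒞f, h𝒞, hU⟩ := h δ hδ
  refine ⟨_root_.closure '' 𝒞, h𝒞f.image _, ?_, ?_⟩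
  · rintro C ⟨C', hC', rfl⟩
    exact ⟨(h𝒞 C' hC').1.closure, closure_mono (h𝒞 C' hC').2.1,
      by rw [Metric.diam_closure]; exact (h𝒞 C' hC').2.2⟩
  · rw [hU, h𝒞f.closure_sUnion, sUnion_image]

lemma PropS.locallyConnectedSpace {P : Set X} (h : PropS P) : LocallyConnectedSpace P := by
  rw [locallyConnectedSpace_iff_connected_subsets]
  rintro ⟨x, hxP⟩ U hU
  -- get a ball around x inside U
  obtain ⟨u, hu, huU⟩ := mem_nhds_subtype P ⟨x, hxP⟩ U |>.mp hU
  obtain ⟨r, hr, hball⟩ := Metric.mem_nhds_iff.mp hu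
  obtain ⟨𝒞, h𝒞f, h𝒞, hUn⟩ := h (r/3) (by positivity)
  set N : Set X := ⋃₀ ((fun C => C ∪ {x}) '' {C | C ∈ 𝒞 ∧ x ∈ _root_.closure C}) with hN
  have hNP : N ⊆ P := by
    rintro y ⟨T, ⟨C, ⟨hC𝒞, _⟩, rfl⟩, hyT⟩
    rcases hyT with hy | hy
    · exact (h𝒞 C hC𝒞).2.1 hy
    · rw [mem_singleton_iff] at hy; subst hy; exact hxP
  have hNconn : IsPreconnected N := by
    apply isPreconnected_sUnion x
    · rintro T ⟨C, _, rfl⟩; exact Or.inr rfl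
    · rintro T ⟨C, ⟨hC𝒞, hxC⟩, rfl⟩
      exact (h𝒞 C hC𝒞).1.subset_closure subset_union_left
        (union_subset subset_closure (by simpa using hxC))
  have hNball : N ⊆ ball x r := by
    rintro y ⟨T, ⟨C, ⟨hC𝒞, hxC⟩, rfl⟩, hyT⟩
    rcases hyT with hy | hy
    · have : dist y x ≤ Metric.diam (_root_.closure C) :=
        dist_le_diam_of_mem isBounded_of_compactSpace (subset_closure hy) hxC
      rw [Metric.diam_closure] at this
      calc dist y x ≤ r/3 := this.trans (h𝒞 C hC𝒞).2.2
        _ < r := by linarith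
    · rw [mem_singleton_iff] at hy; subst hy; simpa using hr
  -- N is a neighborhood of x within P
  have hNnhds : (Subtype.val ⁻¹' N : Set P) ∈ 𝓝 (⟨x, hxP⟩ : P) := by
    set F : Set X := ⋃₀ (_root_.closure '' {C | C ∈ 𝒞 ∧ x ∉ _root_.closure C}) with hF
    have hFclosed : IsClosed F := by
      rw [hF, sUnion_image]
      exact (h𝒞f.subset (fun C hC => hC.1)).isClosed_biUnion
        (fun C _ => isClosed_closure)
    have hxF : x ∉ F := by
      rintro ⟨t, ⟨C, ⟨_, hxC⟩, rfl⟩, hxt⟩; exact hxC hxt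
    rw [mem_nhds_subtype]
    refine ⟨Fᶜ, hFclosed.isOpen_compl.mem_nhds hxF, ?_⟩
    rintro ⟨y, hyP⟩ hy
    simp only [mem_preimage] at hy ⊢
    -- y ∈ P and y ∉ F ⇒ y ∈ N
    have : y ∈ ⋃₀ 𝒞 := by rw [← hUn]; exact hyP
    obtain ⟨C, hC𝒞, hyC⟩ := this
    have hxC : x ∈ _root_.closure C := by
      by_contra hxC
      exact hy ⟨_root_.closure C, ⟨C, ⟨hC𝒞, hxC⟩, rfl⟩, subset_closure hyC⟩
    exact ⟨C ∪ {x}, ⟨C, ⟨hC𝒞, hxC⟩, rfl⟩, Or.inl hyC⟩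
  refine ⟨Subtype.val ⁻¹' N, hNnhds, ?_, ?_⟩
  · rw [← IsInducing.subtypeVal.isPreconnected_image]
    have : Subtype.val '' (Subtype.val ⁻¹' N : Set P) = N := by
      rw [Subtype.image_preimage_coe, inter_eq_right.mpr hNP]
    rwa [this]
  · intro y hy
    exact huU (by exact hball (hNball hy))


lemma star_propS (hD : GoodD D) (S : Set X) (n : ℕ) : PropS (star D S n) := by
  intro δ hδ
  obtain ⟨m, hm⟩ : ∃ m : ℕ, ((2:ℝ)⁻¹)^m < δ/3 :=
    exists_pow_lt_of_lt_one (by positivity) (by norm_num)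
  have hlev : ((2:ℝ)⁻¹)^(n+m+1) ≤ ((2:ℝ)⁻¹)^m :=
    pow_le_pow_of_le_one (by norm_num) (by norm_num) (by omega)
  refine ⟨{T | ∃ B, B ∈ D (n+m+1) ∧ (B ∩ St D S n m).Nonempty ∧
      T = star D B (n+m+1)}, ?_, ?_, star_eq_sUnion_stars hD⟩
  · apply Set.Finite.subset ((D (n+m+1)).finite_toSet.image (fun B => star D B (n+m+1)))
    rintro T ⟨B, hB, _, rfl⟩
    exact ⟨B, hB, rfl⟩
  · rintro T ⟨B, hB, hBm, rfl⟩
    have hBc : IsConnected B := ((hD _).1 B hB).1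
    refine ⟨(star_isConnected hD hBc).2, star_star_subset hB hBm, ?_⟩
    calc Metric.diam (star D B (n+m+1)) ≤ Metric.diam B + 2 * (2:ℝ)⁻¹ ^ (n+m+1) :=
          star_diam hD hBc.1
      _ ≤ (2:ℝ)⁻¹ ^ (n+m+1) + 2 * (2:ℝ)⁻¹ ^ (n+m+1) := by
          have := ((hD _).1 B hB).2; linarith
      _ = 3 * (2:ℝ)⁻¹ ^ (n+m+1) := by ring
      _ ≤ 3 * (2:ℝ)⁻¹ ^ m := by linarith
      _ ≤ δ := by linarith

section
variable [LocallyConnectedSpace X]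

lemma exists_cover (δ : ℝ) (hδ : 0 < δ) : ∃ 𝒟 : Finset (Set X),
    (∀ C ∈ 𝒟, IsConnected C ∧ Metric.diam C ≤ δ) ∧ ⋃₀ (↑𝒟 : Set (Set X)) = univ := by
  classical
  have h := locallyConnectedSpace_iff_subsets_isOpen_isConnected.mp ‹_›
  have key : ∀ x : X, ∃ V : Set X, V ⊆ ball x (δ/3) ∧ IsOpen V ∧ x ∈ V ∧ IsConnected V :=
    fun x => h x (ball x (δ/3)) (ball_mem_nhds x (by positivity))
  choose V hVb hVo hVx hVc using key
  obtain ⟨t, ht⟩ := isCompact_univ.elim_finite_subcover V hVo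
    (fun x _ => mem_iUnion.mpr ⟨x, hVx x⟩)
  refine ⟨t.image V, ?_, ?_⟩
  · intro C hC
    obtain ⟨x, _, rfl⟩ := Finset.mem_image.mp hC
    refine ⟨hVc x, ?_⟩
    calc Metric.diam (V x) ≤ Metric.diam (ball x (δ/3)) :=
          diam_mono (hVb x) isBounded_of_compactSpace
      _ ≤ 2 * (δ/3) := diam_ball (by positivity)
      _ ≤ δ := by linarith
  · apply eq_univ_of_univ_subset
    intro y hy
    obtain ⟨x, hx, hyV⟩ := mem_iUnion₂.mp (ht trivial)
    exact ⟨V x, by simpa using ⟨x, hx, rfl⟩, hyV⟩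

lemma exists_goodD : ∃ D : ℕ → Finset (Set X),
    ∀ m, (∀ C ∈ D m, IsConnected C ∧ Metric.diam C ≤ (2:ℝ)⁻¹ ^ m) ∧
      ⋃₀ (↑(D m) : Set (Set X)) = univ := by
  have : ∀ m : ℕ, ∃ 𝒟 : Finset (Set X),
      (∀ C ∈ 𝒟, IsConnected C ∧ Metric.diam C ≤ (2:ℝ)⁻¹ ^ m) ∧
      ⋃₀ (↑𝒟 : Set (Set X)) = univ := fun m => exists_cover _ (by positivity)
  exact ⟨fun m => (this m).choose, fun m => (this m).choose_spec⟩


/-- A Peano continuum is, for every δ > 0, a finite union of Peano continua of diameter ≤ δ. -/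
lemma peano_pieces (δ : ℝ) (hδ : 0 < δ) : ∃ Ps : Finset (Set X),
    (∀ P ∈ Ps, IsPeanoOn P ∧ Metric.diam P ≤ δ) ∧ ⋃₀ (↑Ps : Set (Set X)) = univ := by
  classical
  obtain ⟨D, hD⟩ := exists_goodD (X := X)
  obtain ⟨n, hn⟩ : ∃ n : ℕ, ((2:ℝ)⁻¹)^n < δ/3 :=
    exists_pow_lt_of_lt_one (by positivity) (by norm_num)
  refine ⟨(D n).image (fun B => _root_.closure (star D B n)), ?_, ?_⟩
  · intro P hP
    obtain ⟨B, hB, rfl⟩ := Finset.mem_image.mp hP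
    have hBc : IsConnected B := ((hD _).1 B hB).1
    refine ⟨⟨isClosed_closure.isCompact, (star_isConnected hD hBc).closure,
      ((star_propS hD B n).closure).locallyConnectedSpace⟩, ?_⟩
    rw [Metric.diam_closure]
    calc Metric.diam (star D B n) ≤ Metric.diam B + 2 * (2:ℝ)⁻¹ ^ n := star_diam hD hBc.1
      _ ≤ (2:ℝ)⁻¹ ^ n + 2 * (2:ℝ)⁻¹ ^ n := by
          have := ((hD _).1 B hB).2; linarith
      _ ≤ δ := by linarith
  · apply eq_univ_of_univ_subset
    intro y hy
    have : y ∈ ⋃₀ (↑(D n) : Set (Set X)) := by rw [(hD n).2]; trivial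
    obtain ⟨B, hB, hyB⟩ := this
    exact ⟨_root_.closure (star D B n), by simpa using ⟨B, hB, rfl⟩,
      subset_closure (subset_star hyB)⟩

end
end
end
end Stmt11Aux

theorem stmt11 {X : Type*} [MetricSpace X] [CompactSpace X] [ConnectedSpace X]
    [LocallyConnectedSpace X] (A : Set X) (hA : (interior A).Nonempty) :
    ∃ U : Set X, U.Nonempty ∧ IsOpen U ∧ U ⊆ A ∧
      ∃ (n : ℕ) (P : Fin n → Set X),
        Set.univ \ U = ⋃ i, P i ∧ ∀ i, IsPeanoOn (P i) := by
  classical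
  obtain ⟨x, hx⟩ := hA
  obtain ⟨r, hr, hball⟩ := Metric.mem_nhds_iff.mp (mem_interior_iff_mem_nhds.mp hx)
  obtain ⟨Ps, hPs, hcov⟩ := Stmt11Aux.peano_pieces (X := X) (r/4) (by positivity)
  set Bs : Finset (Set X) := Ps.filter (fun P => ¬ (P ∩ Metric.ball x (r/4)).Nonempty)
    with hBs
  refine ⟨(⋃₀ (↑Bs : Set (Set X)))ᶜ, ⟨x, ?_⟩, ?_, ?_, ?_⟩
  · rintro ⟨P, hP, hxP⟩
    exact (Finset.mem_filter.mp hP).2 ⟨x, hxP, Metric.mem_ball_self (by positivity)⟩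
  · rw [Set.sUnion_eq_biUnion]
    exact (Bs.finite_toSet.isClosed_biUnion
      (fun P hP => (hPs P (Finset.mem_filter.mp hP).1).1.1.isClosed)).isOpen_compl
  · intro y hy
    have hyPs : y ∈ ⋃₀ (↑Ps : Set (Set X)) := by rw [hcov]; trivial
    obtain ⟨P, hP, hyP⟩ := hyPs
    have hPgood : (P ∩ Metric.ball x (r/4)).Nonempty := by
      by_contra h
      exact hy ⟨P, Finset.mem_filter.mpr ⟨hP, h⟩, hyP⟩
    obtain ⟨z, hzP, hzb⟩ := hPgood
    have hdyz : dist y z ≤ r/4 :=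
      (Metric.dist_le_diam_of_mem Metric.isBounded_of_compactSpace hyP hzP).trans
        (hPs P hP).2
    refine hball (Metric.mem_ball.mpr ?_)
    have hz : dist z x < r/4 := Metric.mem_ball.mp hzb
    calc dist y x ≤ dist y z + dist z x := dist_triangle _ _ _
      _ < r/4 + r/4 := by linarith
      _ ≤ r := by linarith
  · refine ⟨Bs.card, fun i => (Bs.equivFin.symm i : Set X), ?_, ?_⟩
    · rw [Set.diff_eq, Set.univ_inter, compl_compl]
      ext y
      simp only [Set.mem_sUnion, Set.mem_iUnion]
      constructor
      · rintro ⟨P, hP, hyP⟩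
        refine ⟨Bs.equivFin ⟨P, hP⟩, ?_⟩
        simpa using hyP
      · rintro ⟨i, hyi⟩
        exact ⟨(Bs.equivFin.symm i : Set X), (Bs.equivFin.symm i).2, hyi⟩
    · intro i
      exact (hPs _ (Finset.mem_filter.mp (Bs.equivFin.symm i).2).1).1
end

section
/- Let X be a compact metric space, (B, F, P) a self-similar brick (B the attractor of the IFS F on B, P(B) ∪ B = X, C := P(B)). Suppose for every f ∈ F there is a continuous surjection φ_f: X → f(B), Lipschitz on B and constant on C. Then there exist finite families F' of continuous maps X → B (Lipschitz on B, constant on C, with F'(X) = B and each having Lipschitz constant < 1 on B) and P' of continuous maps X → C (constant on C, with P'(X) = C); namely F' = {g∘φ_f : g ∈ F^k, f ∈ F} for suitable k and P' = {p∘φ_f : p ∈ P, f ∈ F}. -/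
/-!
Write `F^k` for the `k`-fold compositions of maps of `F`. Iterating the attractor equation
`⋃ f ∈ F, f '' B = B` gives `⋃ g ∈ F^k, g '' B = B`; since `range (φ f) = f '' B` and the `f '' B`
cover `B`, the ranges of the `g ∘ φ f` (resp. `p ∘ φ f`) cover `⋃ g ∈ F^k, g '' B = B`
(resp. `⋃ p ∈ P, p '' B = C`).
Each `g ∈ F^k` is `c ^ k`-Lipschitz on `B`, where `c < 1` bounds the contraction ratios of `F`, so
`g ∘ φ f` is `c ^ k * M`-Lipschitz on `B` for a common Lipschitz constant `M` of the `φ f`; this is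
`< 1` once `k` is large. Constancy on `C` is inherited from `φ f`.
-/

open Set

section FamilyPow

variable {X : Type*}

def familyPow (F : Set (X → X)) (k : ℕ) : Set (X → X) :=
  Comp '' {l | l.length = k ∧ ∀ g ∈ l, g ∈ F}

variable {F : Set (X → X)}

@[simp]
lemma familyPow_zero : familyPow F 0 = {id} := by
  ext h
  simp [familyPow, Comp, List.length_eq_zero_iff, eq_comm (a := h)]

lemma familyPow_succ (k : ℕ) : familyPow F (k + 1) = image2 (· ∘ ·) F (familyPow F k) := by
  ext h
  constructor
  · rintro ⟨l, ⟨hl, hlF⟩, rfl⟩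
    obtain ⟨f, t, rfl⟩ := List.exists_cons_of_length_eq_add_one hl
    exact ⟨f, hlF f (by simp), Comp t, ⟨t, ⟨by simpa using hl, fun g hg ↦ hlF g (by simp [hg])⟩, rfl⟩,
      rfl⟩
  · rintro ⟨f, hf, _, ⟨t, ⟨ht, htF⟩, rfl⟩, rfl⟩
    refine ⟨f :: t, ⟨by simp [ht], ?_⟩, rfl⟩
    simpa [hf] using htF

lemma Set.Finite.familyPow (hF : F.Finite) (k : ℕ) : (familyPow F k).Finite := by
  induction k with
  | zero => simp
  | succ k ih => simpa [familyPow_succ] using hF.image2 _ ih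

lemma mapsTo_of_mem_familyPow {s : Set X} (hF : ∀ f ∈ F, MapsTo f s s) {k : ℕ} :
    ∀ g ∈ familyPow F k, MapsTo g s s := by
  induction k with
  | zero => simp [mapsTo_id]
  | succ k ih =>
    simp only [familyPow_succ, forall_mem_image2]
    intro f hf g hg
    exact (hF f hf).comp (ih g hg)

lemma lipschitzOnWith_of_mem_familyPow [PseudoEMetricSpace X] {s : Set X} {K : NNReal}
    (hF : ∀ f ∈ F, MapsTo f s s ∧ LipschitzOnWith K f s) {k : ℕ} :
    ∀ g ∈ familyPow F k, LipschitzOnWith (K ^ k) g s := by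
  induction k with
  | zero => simpa using LipschitzWith.id.lipschitzOnWith
  | succ k ih =>
    simp only [familyPow_succ, forall_mem_image2]
    intro f hf g hg
    rw [pow_succ']
    exact (hF f hf).2.comp (ih g hg) (mapsTo_of_mem_familyPow (fun f hf ↦ (hF f hf).1) g hg)

lemma biUnion_familyPow_image {s : Set X} (hs : ⋃ f ∈ F, f '' s = s) (k : ℕ) :
    ⋃ g ∈ familyPow F k, g '' s = s := by
  induction k with
  | zero => simp
  | succ k ih =>
    simp_rw [familyPow_succ, biUnion_image2, image_comp, ← image_iUnion₂, ih, hs]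

end FamilyPow

lemma biUnion_range_image2_comp {X Y Z : Type*} {F : Set (X → X)} {G : Set (X → Y)} {s : Set X}
    (hs : ⋃ f ∈ F, f '' s = s) {φ : (X → X) → Z → X} (hφ : ∀ f ∈ F, range (φ f) = f '' s) :
    ⋃ q ∈ image2 (fun g f ↦ g ∘ φ f) G F, range q = ⋃ g ∈ G, g '' s := by
  rw [biUnion_image2]
  refine iUnion₂_congr fun g _ ↦ ?_
  rw [← hs, image_iUnion₂]
  exact iUnion₂_congr fun f hf ↦ by rw [range_comp, hφ f hf]

section UniformLipschitz

variable {ι X Y : Type*} [PseudoEMetricSpace X] [PseudoEMetricSpace Y] {I : Set ι}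
  {f : ι → X → Y} {s : Set X}

lemma Set.Finite.exists_lipschitzOnWith (hI : I.Finite)
    (h : ∀ i ∈ I, ∃ K, LipschitzOnWith K (f i) s) : ∃ K, ∀ i ∈ I, LipschitzOnWith K (f i) s := by
  have := hI.fintype
  choose K hK using fun i : I ↦ h i i.2
  exact ⟨Finset.univ.sup K, fun i hi ↦ (hK ⟨i, hi⟩).weaken (Finset.le_sup (Finset.mem_univ _))⟩

lemma Set.Finite.exists_lt_one_lipschitzOnWith (hI : I.Finite)
    (h : ∀ i ∈ I, ∃ K < 1, LipschitzOnWith K (f i) s) :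
    ∃ K < 1, ∀ i ∈ I, LipschitzOnWith K (f i) s := by
  have := hI.fintype
  choose K hK1 hK using fun i : I ↦ h i i.2
  exact ⟨Finset.univ.sup K, (Finset.sup_lt_iff one_pos).2 fun i _ ↦ hK1 i,
    fun i hi ↦ (hK ⟨i, hi⟩).weaken (Finset.le_sup (Finset.mem_univ _))⟩

end UniformLipschitz

lemma NNReal.exists_pow_mul_lt_one {c : NNReal} (hc : c < 1) (M : NNReal) :
    ∃ k : ℕ, c ^ k * M < 1 := by
  have := (NNReal.tendsto_pow_atTop_nhds_zero_of_lt_one hc).mul_const M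
  rw [zero_mul] at this
  exact (this.eventually_lt_const one_pos).exists

theorem stmt16_general {X : Type*} [MetricSpace X]
    (B : Set X) (F P : Set (X → X))
    (hFfin : F.Finite)
    (hFcontr : ∀ f ∈ F, f '' B ⊆ B ∧ ∃ K : NNReal, K < 1 ∧ LipschitzOnWith K f B)
    (hattr : (⋃ f ∈ F, f '' B) = B)
    (hPfin : P.Finite) (hPcont : ∀ p ∈ P, ContinuousOn p B)
    (C : Set X) (hC : C = ⋃ p ∈ P, p '' B)
    (φ : (X → X) → (X → X))
    (hφ : ∀ f ∈ F, Continuous (φ f) ∧ Set.range (φ f) = f '' B ∧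
      (∃ K : NNReal, LipschitzOnWith K (φ f) B) ∧ ∃ c : X, ∀ x ∈ C, φ f x = c) :
    ∃ k : ℕ,
      (let F' : Set (X → X) :=
        {h | ∃ (l : List (X → X)) (f : X → X), l.length = k ∧ (∀ g ∈ l, g ∈ F) ∧
          f ∈ F ∧ h = Comp l ∘ φ f};
       F'.Finite ∧
       (∀ g ∈ F', Continuous g ∧ Set.range g ⊆ B ∧
          (∃ K : NNReal, K < 1 ∧ LipschitzOnWith K g B) ∧
          ∃ c : X, ∀ x ∈ C, g x = c) ∧
       (⋃ g ∈ F', Set.range g) = B) ∧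
      (let P' : Set (X → X) := {h | ∃ p ∈ P, ∃ f ∈ F, h = p ∘ φ f};
       P'.Finite ∧
       (∀ q ∈ P', Continuous q ∧ Set.range q ⊆ C ∧ ∃ c : X, ∀ x ∈ C, q x = c) ∧
       (⋃ q ∈ P', Set.range q) = C) := by
  have hmaps : ∀ f ∈ F, MapsTo f B B := fun f hf ↦ mapsTo_iff_image_subset.2 (hFcontr f hf).1
  have hφB : ∀ f ∈ F, ∀ x, φ f x ∈ B := fun f hf x ↦
    (hFcontr f hf).1 <| (hφ f hf).2.1 ▸ mem_range_self x
  obtain ⟨c, hc, hcF⟩ := hFfin.exists_lt_one_lipschitzOnWith (f := id) fun f hf ↦ (hFcontr f hf).2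
  obtain ⟨M, hMφ⟩ := hFfin.exists_lipschitzOnWith fun f hf ↦ (hφ f hf).2.2.1
  obtain ⟨k, hk⟩ := NNReal.exists_pow_mul_lt_one hc M
  have hF' : {h | ∃ (l : List (X → X)) (f : X → X), l.length = k ∧ (∀ g ∈ l, g ∈ F) ∧
      f ∈ F ∧ h = Comp l ∘ φ f} = image2 (fun g f ↦ g ∘ φ f) (familyPow F k) F := by
    ext h; simp [familyPow, eq_comm, and_assoc]
  have hP' : {h | ∃ p ∈ P, ∃ f ∈ F, h = p ∘ φ f} = image2 (fun p f ↦ p ∘ φ f) P F := by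
    ext h; simp [eq_comm]
  refine ⟨k, ⟨?_, ?_, ?_⟩, ⟨?_, ?_, ?_⟩⟩ <;> simp only [hF', hP', forall_mem_image2]
  · exact (hFfin.familyPow k).image2 _ hFfin
  · intro g hg f hf
    have hgB := lipschitzOnWith_of_mem_familyPow (fun f hf ↦ ⟨hmaps f hf, hcF f hf⟩) g hg
    obtain ⟨x₀, hx₀⟩ := (hφ f hf).2.2.2
    refine ⟨hgB.continuousOn.comp_continuous (hφ f hf).1 (hφB f hf), ?_, ⟨_, hk, ?_⟩, g x₀, ?_⟩
    · rintro _ ⟨x, rfl⟩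
      exact mapsTo_of_mem_familyPow hmaps g hg (hφB f hf x)
    · exact hgB.comp (hMφ f hf) fun x _ ↦ hφB f hf x
    · intro x hx; simp [hx₀ x hx]
  · rw [biUnion_range_image2_comp hattr fun f hf ↦ (hφ f hf).2.1, biUnion_familyPow_image hattr]
  · exact hPfin.image2 _ hFfin
  · intro p hp f hf
    obtain ⟨x₀, hx₀⟩ := (hφ f hf).2.2.2
    refine ⟨(hPcont p hp).comp_continuous (hφ f hf).1 (hφB f hf), ?_, p x₀, ?_⟩
    · rintro _ ⟨x, rfl⟩
      exact hC ▸ mem_biUnion hp (mem_image_of_mem p (hφB f hf x))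
    · intro x hx; simp [hx₀ x hx]
  · rw [biUnion_range_image2_comp hattr fun f hf ↦ (hφ f hf).2.1, hC]

theorem stmt16 {X : Type*} [MetricSpace X] [CompactSpace X]
    (B : Set X) (hB : IsClosed B) (F P : Set (X → X))
    (hFfin : F.Finite)
    (hFcontr : ∀ f ∈ F, f '' B ⊆ B ∧ ∃ K : NNReal, K < 1 ∧ LipschitzOnWith K f B)
    (hattr : (⋃ f ∈ F, f '' B) = B)
    (hPfin : P.Finite) (hPcont : ∀ p ∈ P, ContinuousOn p B)
    (hbrick : (⋃ p ∈ P, p '' B) ∪ B = Set.univ)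
    (C : Set X) (hC : C = ⋃ p ∈ P, p '' B)
    (φ : (X → X) → (X → X))
    (hφ : ∀ f ∈ F, Continuous (φ f) ∧ Set.range (φ f) = f '' B ∧
      (∃ K : NNReal, LipschitzOnWith K (φ f) B) ∧ ∃ c : X, ∀ x ∈ C, φ f x = c) :
    ∃ k : ℕ,
      (let F' : Set (X → X) :=
        {h | ∃ (l : List (X → X)) (f : X → X), l.length = k ∧ (∀ g ∈ l, g ∈ F) ∧
          f ∈ F ∧ h = Comp l ∘ φ f};
       F'.Finite ∧
       (∀ g ∈ F', Continuous g ∧ Set.range g ⊆ B ∧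
          (∃ K : NNReal, K < 1 ∧ LipschitzOnWith K g B) ∧
          ∃ c : X, ∀ x ∈ C, g x = c) ∧
       (⋃ g ∈ F', Set.range g) = B) ∧
      (let P' : Set (X → X) := {h | ∃ p ∈ P, ∃ f ∈ F, h = p ∘ φ f};
       P'.Finite ∧
       (∀ q ∈ P', Continuous q ∧ Set.range q ⊆ C ∧ ∃ c : X, ∀ x ∈ C, q x = c) ∧
       (⋃ q ∈ P', Set.range q) = C) :=
  stmt16_general B F P hFfin hFcontr hattr hPfin hPcont C hC φ hφ
end

section
/- The closed unit interval [0,1] is a self regenerating fractal: for every nonempty open set U ⊆ [0,1] there exists a finite family F of continuous self-maps of [0,1], each constant on [0,1] \ U, such that ([0,1], F) is a topological fractal. -/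
open Set

/-!
Pick a ball `B(x, ε) ⊆ U`, with `ε ≤ 1/2` so that `[0,1]` leaves the ball. The cone
`t ↦ clamp (1 - |t - x| / ε)` is a Lipschitz map of `[0,1]` onto `[0,1]` vanishing off `U`.
Following it by the affine maps `y ↦ (k + y) / N` of `[0,1]` onto `[k/N, (k+1)/N]`, `k < N`,
gives finitely many maps whose images cover `[0,1]`; for `N` beyond the Lipschitz constant of the
cone they are uniform contractions, and uniform contractions of a compact metric space are
topologically contracting: `n`-fold compositions have diameter at most `Kⁿ · diam`, eventually
below a Lebesgue number of the cover.
-/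

open Metric unitInterval

theorem LipschitzWith.comp_list {X : Type*} [PseudoEMetricSpace X] {K : NNReal}
    {l : List (X → X)} (hl : ∀ f ∈ l, LipschitzWith K f) :
    LipschitzWith (K ^ l.length) (Comp l) := by
  induction l with
  | nil => simpa [Comp] using LipschitzWith.id
  | cons f l ih =>
    rw [List.length_cons, pow_succ']
    exact (hl f List.mem_cons_self).comp (ih fun g hg => hl g (List.mem_cons_of_mem f hg))

theorem topContracting_univ_of_lipschitzWith {X : Type*} [PseudoMetricSpace X] [CompactSpace X]
    [Nonempty X] {F : Set (X → X)} {K : NNReal} (hK : K < 1) (hF : ∀ f ∈ F, LipschitzWith K f) :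
    TopContracting F univ := by
  intro 𝒰 h𝒰 hcover
  obtain ⟨r, hr, hlebesgue⟩ := lebesgue_number_lemma_of_metric_sUnion isCompact_univ h𝒰 hcover
  set D := diam (univ : Set X)
  have hsmall : ∀ᶠ n in Filter.atTop, (K : ℝ) ^ n * D < r := by
    have := (tendsto_pow_atTop_nhds_zero_of_lt_one K.coe_nonneg hK).mul_const D
    rw [zero_mul] at this
    exact this.eventually (gt_mem_nhds hr)
  obtain ⟨n, hn⟩ := hsmall.exists
  refine ⟨n, fun l hlen hlF => ?_⟩
  let x₀ : X := Classical.arbitrary X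
  obtain ⟨U, hU𝒰, hballU⟩ := hlebesgue (Comp l x₀) (mem_univ _)
  refine ⟨U, hU𝒰, ?_⟩
  rintro _ ⟨x, -, rfl⟩
  apply hballU
  calc dist (Comp l x) (Comp l x₀) ≤ (K : ℝ) ^ n * dist x x₀ := by
        simpa [hlen] using (LipschitzWith.comp_list fun f hf => hF f (hlF f hf)).dist_le_mul x x₀
    _ ≤ (K : ℝ) ^ n * D := by
        gcongr
        exact dist_le_diam_of_mem isCompact_univ.isBounded (mem_univ _) (mem_univ _)
    _ < r := hn

section DistBump

variable {X : Type*} [PseudoMetricSpace X]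

noncomputable def distBump (x : X) (ε : ℝ) (t : X) : I :=
  projIcc 0 1 zero_le_one (1 - dist t x / ε)

theorem distBump_self (x : X) (ε : ℝ) : distBump x ε x = 1 := by
  simp only [distBump, dist_self, zero_div, sub_zero]
  exact projIcc_right zero_le_one

theorem distBump_eq_zero {x t : X} {ε : ℝ} (hε : 0 < ε) (ht : ε ≤ dist t x) :
    distBump x ε t = 0 :=
  projIcc_of_le_left zero_le_one (by rw [sub_nonpos, le_div_iff₀ hε, one_mul]; exact ht)

theorem lipschitzWith_distBump (x : X) {ε : ℝ} (hε : 0 < ε) :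
    LipschitzWith (Real.toNNReal ε⁻¹) (distBump x ε) := by
  refine LipschitzWith.of_dist_le_mul fun s t => ?_
  rw [Real.coe_toNNReal _ (inv_nonneg.2 hε.le), Subtype.dist_eq, Real.dist_eq]
  calc |((distBump x ε s : I) : ℝ) - distBump x ε t|
      ≤ |(1 - dist s x / ε) - (1 - dist t x / ε)| := abs_projIcc_sub_projIcc zero_le_one
    _ = |dist t x - dist s x| / ε := by
        rw [← abs_of_pos hε, ← abs_div, abs_of_pos hε]; ring_nf
    _ ≤ dist s t / ε := by gcongr; rw [abs_sub_comm]; exact abs_dist_sub_le s t x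
    _ = ε⁻¹ * dist s t := div_eq_inv_mul _ _

theorem distBump_surjective [PreconnectedSpace X] {x y : X} {ε : ℝ} (hε : 0 < ε)
    (hy : ε ≤ dist y x) : Function.Surjective (distBump x ε) := by
  intro z
  have hIcc := intermediate_value_univ y x (lipschitzWith_distBump x hε).continuous
  rw [distBump_eq_zero hε hy, distBump_self x ε] at hIcc
  exact hIcc ⟨nonneg', le_one'⟩

end DistBump

theorem unitInterval.exists_half_le_dist (x : I) : ∃ y : I, 1 / 2 ≤ dist y x := by
  by_contra! h
  have h01 := dist_triangle_right (0 : I) 1 x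
  have : dist (0 : I) 1 = 1 := by simp [Subtype.dist_eq]
  linarith [h 0, h 1]

section SubintervalMap

variable {N : ℕ}

theorem add_div_mem_unitInterval (k : Fin N) (y : I) : ((k : ℝ) + y) / N ∈ I := by
  have hN : (0 : ℝ) < N := by exact_mod_cast k.pos
  have hk : (k : ℝ) + 1 ≤ N := by exact_mod_cast k.isLt
  exact ⟨by have := nonneg y; positivity,
    (div_le_one hN).2 (by linarith [le_one y])⟩

noncomputable def subintervalMap (k : Fin N) (y : I) : I :=
  ⟨((k : ℝ) + y) / N, add_div_mem_unitInterval k y⟩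

theorem lipschitzWith_subintervalMap (k : Fin N) :
    LipschitzWith (N : NNReal)⁻¹ (subintervalMap k) := by
  refine LipschitzWith.of_dist_le_mul fun y z => le_of_eq ?_
  rw [Subtype.dist_eq, Subtype.dist_eq, Real.dist_eq, Real.dist_eq, NNReal.coe_inv,
    NNReal.coe_natCast, ← abs_of_pos (show (0 : ℝ) < N by exact_mod_cast k.pos), ← abs_inv,
    ← abs_mul]
  simp only [subintervalMap]
  ring_nf

theorem iUnion_range_subintervalMap (hN : N ≠ 0) :
    ⋃ k : Fin N, range (subintervalMap k) = univ := by
  have hN' : (0 : ℝ) < N := by exact_mod_cast Nat.pos_of_ne_zero hN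
  refine eq_univ_of_forall fun y => mem_iUnion.2 ?_
  by_cases hfloor : ⌊(y : ℝ) * N⌋₊ < N
  · have hle := Nat.floor_le (mul_nonneg (nonneg y) hN'.le)
    have hlt := Nat.lt_floor_add_one ((y : ℝ) * N)
    refine ⟨⟨_, hfloor⟩, ⟨(y : ℝ) * N - ⌊(y : ℝ) * N⌋₊, by linarith, by linarith⟩, ?_⟩
    ext
    simp only [subintervalMap]
    field_simp
    ring
  · -- `⌊y N⌋ = N` is not an index; it happens only for `y = 1`
    have hy : (y : ℝ) = 1 := by
      refine le_antisymm (le_one y) ?_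
      have : (N : ℝ) ≤ y * N :=
        (Nat.cast_le.2 (not_lt.1 hfloor)).trans (Nat.floor_le (mul_nonneg (nonneg y) hN'.le))
      nlinarith
    refine ⟨⟨N - 1, by omega⟩, 1, ?_⟩
    ext
    simp [subintervalMap, hy, Nat.cast_sub (Nat.one_le_iff_ne_zero.2 hN), hN'.ne']

end SubintervalMap

open unitInterval in
theorem stmt18 :
    ∀ U : Set I, IsOpen U → U.Nonempty →
      ∃ F : Set (I → I), F.Finite ∧
        (∀ f ∈ F, Continuous f ∧ ∃ c : I, ∀ x ∈ Set.univ \ U, f x = c) ∧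
        (⋃ f ∈ F, Set.range f) = Set.univ ∧ TopContracting F Set.univ := by
  intro U hU ⟨x, hxU⟩
  obtain ⟨ε, hε, hballU⟩ := isOpen_iff.1 hU x hxU
  obtain ⟨y, hy⟩ := exists_half_le_dist x
  set ε' := min ε (1 / 2)
  have hε' : 0 < ε' := lt_min hε one_half_pos
  set φ := distBump x ε'
  have hφ_zero : ∀ t ∉ U, φ t = 0 := fun t ht => distBump_eq_zero hε' <| not_lt.1 fun h =>
    ht (hballU (ball_subset_ball (min_le_left _ _) (mem_ball.2 h)))
  obtain ⟨N, hN⟩ := exists_nat_gt (Real.toNNReal ε'⁻¹)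
  have hN0 : (0 : NNReal) < N := hN.pos
  have hlip (k : Fin N) :
      LipschitzWith ((N : NNReal)⁻¹ * Real.toNNReal ε'⁻¹) (subintervalMap k ∘ φ) :=
    (lipschitzWith_subintervalMap k).comp (lipschitzWith_distBump x hε')
  refine ⟨range fun k : Fin N => subintervalMap k ∘ φ, finite_range _, ?_, ?_, ?_⟩
  · rintro _ ⟨k, rfl⟩
    exact ⟨(hlip k).continuous, subintervalMap k 0, fun t ht => congrArg _ (hφ_zero t ht.2)⟩
  · have hφ_surj : Function.Surjective φ := distBump_surjective hε' ((min_le_right _ _).trans hy)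
    simp only [biUnion_range, hφ_surj.range_comp]
    exact iUnion_range_subintervalMap (by exact_mod_cast hN0.ne')
  · refine topContracting_univ_of_lipschitzWith ((inv_mul_lt_one₀ hN0).2 hN) ?_
    rintro _ ⟨k, rfl⟩
    exact hlip k
end
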